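/- arXiv:1705.03192 — 2 statements merged into one kernel-verified Lean document; each statement's English description precedes it below -/
import Mathlib

section
/- Let L be the (K,D) AIR matrix with D ≥ ⌈K/2⌉ (so β₀=0 and λ₁=K−D). Then for every k ∈ [K−D, K−1], the broadcast symbol c_{k mod (K−D)} generated by column k mod (K−D) of L contains x_k and contains no symbol from the set {x_{k−(K−D)+1}, ..., x_{k−1}}; consequently receiver R_k, which knows {x_{k+1},...,x_{k+D}} (indices mod K), can decode x_k from the single symbol c_{k mod (K−D)}. -/
/-- Entry (j,k) of the AIR matrix of size K × n (n = K - D), as a Boolean. -/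
def airEntry : ℕ → ℕ → ℕ → ℕ → Bool
  | K, n, j, k =>
    if h : n = 0 ∨ K ≤ n then decide (j = k)
    else
      if j < K - K % n then decide (j % n = k % n)
      else
        if k < n - n % (K % n) then decide (k % (K % n) = j - (K - K % n))
        else airEntry (K % n) (n % (K % n)) (j - (K - K % n)) (k - (n - n % (K % n)))
  termination_by K n _ _ => K
  decreasing_by
    push_neg at h
    exact lt_trans (Nat.mod_lt _ (Nat.pos_of_ne_zero h.1)) h.2

/-- The pair (λ_{i-1}, λ_i) of the Euclidean chain, with λ_{-1} = K - D and λ₀ = D. -/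
def lamPair (K D : ℕ) : ℕ → ℕ × ℕ
  | 0 => (K - D, D)
  | i + 1 =>
    let p := lamPair K D i
    (p.2, if p.2 = 0 then 0 else p.1 % p.2)

/-- λ_i of the Euclidean chain. -/
def lam (K D i : ℕ) : ℕ := (lamPair K D i).2

/-- λ_{i-1} of the Euclidean chain (so `lamS K D 0 = K - D`). -/
def lamS (K D i : ℕ) : ℕ := (lamPair K D i).1

/-- β_i = λ_{i-1} / λ_i of the Euclidean chain. -/
def beta (K D i : ℕ) : ℕ := (lamPair K D i).1 / (lamPair K D i).2

/-- down-distance of the diagonal entry L(k,k) of the K × n AIR matrix. -/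
noncomputable def ddown (K n k : ℕ) : ℕ :=
  sSup {t : ℕ | 0 < t ∧ k + t < K ∧ airEntry K n (k + t) k = true}

/-- up-distance of the entry L(j,k) of the K × n AIR matrix. -/
noncomputable def dup (K n j k : ℕ) : ℕ :=
  j - sSup {j' : ℕ | j' < j ∧ airEntry K n j' k = true}

/-- right-distance of the entry L(j,k) of the K × n AIR matrix. -/
noncomputable def dright (K n j k : ℕ) : ℕ :=
  sInf {t : ℕ | 0 < t ∧ k + t < n ∧ airEntry K n j (k + t) = true}


/-!
The first `K - K % n` rows of the `K × n` AIR matrix (`n = K - D`) are stacked `n × n` identity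
blocks, and the remaining `K % n` rows start with an identity block in their first `K % n` columns.
So row `k` meets column `k % n` in a `1`, and any other `1` above it in that column lies in a row
congruent to `k` mod `n`, hence at least `n` rows higher. The window `{x_{k+1}, …, x_{k+D}}` is then
just the complement, mod `K`, of the `n - 1` rows right above `k`.
-/

section AIRMatrix

variable {K n j k : ℕ}

lemma airEntry_of_lt_sub_mod (hn : 0 < n) (hnK : n < K) (hj : j < K - K % n) :
    airEntry K n j k = decide (j % n = k % n) := by
  rw [airEntry, dif_neg (by omega), if_pos hj]

lemma airEntry_of_sub_mod_le (hn : 0 < n) (hnK : n < K) (hj : K - K % n ≤ j) (hk : k < K % n) :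
    airEntry K n j k = decide (k = j - (K - K % n)) := by
  have hmn : K % n < n := Nat.mod_lt K hn
  have hdiv : K % n * (n / (K % n)) + n % (K % n) = n := Nat.div_add_mod n (K % n)
  have hquot : K % n * 1 ≤ K % n * (n / (K % n)) :=
    Nat.mul_le_mul_left _ ((Nat.one_le_div_iff (by omega)).mpr hmn.le)
  have hk' : k < n - n % (K % n) := by omega
  rw [airEntry, dif_neg (by omega), if_neg (by omega), if_pos hk', Nat.mod_eq_of_lt hk]

lemma mod_eq_sub_of_sub_mod_le (hn : 0 < n) (hj : K - K % n ≤ j) (hjK : j < K) :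
    j % n = j - (K - K % n) := by
  have hK : n * (K / n) + K % n = K := Nat.div_add_mod K n
  have hmn : K % n < n := Nat.mod_lt K hn
  rw [show j = n * (K / n) + (j - (K - K % n)) by omega, Nat.mul_add_mod,
    Nat.mod_eq_of_lt (by omega)]
  omega

lemma airEntry_mod_self (hn : 0 < n) (hnK : n < K) (hk : k < K) :
    airEntry K n k (k % n) = true := by
  by_cases hktop : k < K - K % n
  · simp [airEntry_of_lt_sub_mod hn hnK hktop]
  · have hkm := mod_eq_sub_of_sub_mod_le hn (not_lt.mp hktop) hk
    rw [airEntry_of_sub_mod_le hn hnK (not_lt.mp hktop) (by omega)]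
    simpa using hkm

lemma le_sub_of_airEntry_mod_eq_true (hn : 0 < n) (hnK : n < K) (hjk : j < k) (hk : k < K)
    (h : airEntry K n j (k % n) = true) : n ≤ k - j := by
  suffices hjk_mod : j % n = k % n from
    Nat.le_of_dvd (by omega) ((Nat.modEq_iff_dvd' hjk.le).mp hjk_mod)
  by_cases hjtop : j < K - K % n
  · simpa [airEntry_of_lt_sub_mod hn hnK hjtop] using h
  · have hkm := mod_eq_sub_of_sub_mod_le hn (show K - K % n ≤ k by omega) hk
    rw [airEntry_of_sub_mod_le hn hnK (not_lt.mp hjtop) (by omega)] at h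
    simp only [decide_eq_true_eq] at h
    omega

end AIRMatrix

theorem stmt15_general (K D : ℕ) (hD : 0 < D) (hDK : D < K) :
    ∀ k, K - D ≤ k → k < K →
      airEntry K (K - D) k (k % (K - D)) = true ∧
      (∀ j, k - (K - D) < j → j < k → airEntry K (K - D) j (k % (K - D)) = false) ∧
      (∀ j < K, airEntry K (K - D) j (k % (K - D)) = true → j ≠ k →
        1 ≤ (j + K - k) % K ∧ (j + K - k) % K ≤ D) := by
  intro k hDk hk
  have hn : 0 < K - D := by omega
  have hnK : K - D < K := by omega
  refine ⟨airEntry_mod_self hn hnK hk, fun j hj hjk => ?_, fun j hjK h hjk => ?_⟩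
  · exact Bool.eq_false_iff.mpr fun h =>
      absurd (le_sub_of_airEntry_mod_eq_true hn hnK hjk hk h) (by omega)
  · rcases Nat.lt_or_gt_of_ne hjk with hjk | hkj
    · have := le_sub_of_airEntry_mod_eq_true hn hnK hjk hk h
      rw [Nat.mod_eq_of_lt (by omega)]
      omega
    · rw [show j + K - k = (j - k) + K by omega, Nat.add_mod_right, Nat.mod_eq_of_lt (by omega)]
      omega

/-- Case (iv) of Theorem 2, D ≥ ⌈K/2⌉: for k ∈ [K−D, K−1], column k mod (K−D) of the AIR
matrix contains x_k, contains no symbol from {x_{k−(K−D)+1},…,x_{k−1}}, and every other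
symbol it contains lies in the side-information window {x_{k+1},…,x_{k+D}} (mod K). -/
theorem stmt15 (K D : ℕ) (hD : 0 < D) (hDK : D < K) (hhalf : (K + 1) / 2 ≤ D) :
    ∀ k, K - D ≤ k → k < K →
      airEntry K (K - D) k (k % (K - D)) = true ∧
      (∀ j, k - (K - D) < j → j < k → airEntry K (K - D) j (k % (K - D)) = false) ∧
      (∀ j < K, airEntry K (K - D) j (k % (K - D)) = true → j ≠ k →
        1 ≤ (j + K - k) % K ∧ (j + K - k) % K ≤ D) :=
  stmt15_general K D hD hDK
end

section
/- Let L be the (K,D) AIR matrix, k ∈ E_i for i ∈ [0, ⌈l/2⌉−1] with r-th down-distances t_{k,1},...,t_{k,p_k} as above. Then for each τ ∈ [1, p_k], the entry L(k+t_{k,τ}+d_down(k+t_{k,τ}), k+t_{k,τ}) lies in the even-submatrix I_{λ_{2i}×β_{2i}λ_{2i}}, and d_down(k+t_{k,τ}) = d_down(k) = D + λ_{2i+1}; moreover d_up(k+t_{k,τ}+d_down(k+t_{k,τ}), k+t_{k,τ}) = λ_{2i} + λ_{2i+1}. -/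
/-!
Write `B = K - D` and let `m = A % B`, `r = B % m`. The `A × B` AIR matrix consists of stacked
copies of `I_B` on top of its last `m` rows; those rows carry copies of `I_m` in the first
`B - r` columns and the `m × r` AIR matrix in the last `r` columns. If `A % B = D`, the Euclidean
chain of this submatrix is the chain of `(K, D)` shifted by two, so induction on `i` reduces a
column of `E_i` to a column of `E_0`, where both the lowest one (in the bottom `m` rows) and the
one above it (in the last copy of `I_B`) are explicit. The two lowest ones of every column
`k ∈ E_i` then sit at rows `k + D + λ_{2i+1}` and `k + D - λ_{2i}`, so `E_i` is shifted rigidly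
and `k + t` stays in `E_i` as long as `k + d_down(k) + t < K`.
-/

open Set

def airColumn (A B k : ℕ) : Set ℕ := {j | j < A ∧ airEntry A B j k = true}

/-- The column range `E_i`. The paper's left end `K - D - λ_{2i-1} + (β_{2i} - 1) λ_{2i}` is
rewritten with `λ_{2i-1} = β_{2i} λ_{2i} + λ_{2i+1}`. -/
def airE (K D i : ℕ) : Set ℕ :=
  Ico (K - D - (lam K D (2 * i) + lam K D (2 * i + 1))) (K - D - lam K D (2 * i + 1))

section EuclideanChain

variable {K D : ℕ}

theorem lam_succ (j : ℕ) :
    lam K D (j + 1) = if lam K D j = 0 then 0 else lamS K D j % lam K D j := rfl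

theorem lam_one (hD : D ≠ 0) : lam K D 1 = (K - D) % D := if_neg hD

theorem lam_two (h : lam K D 1 ≠ 0) : lam K D 2 = D % lam K D 1 := if_neg h

theorem lam_succ_eq_zero {j : ℕ} (h : lam K D j = 0) : lam K D (j + 1) = 0 := by
  rw [lam_succ, if_pos h]

theorem lam_succ_le (j : ℕ) : lam K D (j + 1) ≤ lam K D j := by
  rw [lam_succ]
  split_ifs with h
  · exact Nat.zero_le _
  · exact (Nat.mod_lt _ (Nat.pos_of_ne_zero h)).le

theorem lam_antitone : Antitone (lam K D) := antitone_nat_of_succ_le lam_succ_le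

theorem lam_succ_add_lam_succ_succ_le (j : ℕ) :
    lam K D (j + 1) + lam K D (j + 2) ≤ lam K D j := by
  by_cases h : lam K D (j + 1) = 0
  · rw [h, lam_succ_eq_zero h]
    exact Nat.zero_le _
  have hle := lam_succ_le (K := K) (D := D) j
  have hq : lam K D (j + 1) ≤ lam K D (j + 1) * (lam K D j / lam K D (j + 1)) :=
    Nat.le_mul_of_pos_right _ (Nat.div_pos hle (Nat.pos_of_ne_zero h))
  have hdiv := Nat.div_add_mod (lam K D j) (lam K D (j + 1))
  rw [show j + 2 = j + 1 + 1 from rfl, lam_succ (j + 1), if_neg h]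
  change _ + lam K D j % _ ≤ _
  omega

theorem lamS_eq_beta_mul_add {j : ℕ} (h : lam K D j ≠ 0) :
    lamS K D j = beta K D j * lam K D j + lam K D (j + 1) := by
  rw [lam_succ, if_neg h, Nat.mul_comm]
  exact (Nat.div_add_mod _ _).symm

theorem lamPair_add (s j : ℕ) :
    lamPair K D (s + j) =
      lamPair ((lamPair K D s).1 + (lamPair K D s).2) (lamPair K D s).2 j := by
  induction j with
  | zero => simp [lamPair]
  | succ j ih => rw [← Nat.add_assoc, lamPair, ih, lamPair]

theorem lam_add_two (j : ℕ) :
    lam (lam K D 1 + lam K D 2) (lam K D 2) j = lam K D (j + 2) := by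
  change (lamPair _ _ j).2 = (lamPair K D (j + 2)).2
  rw [Nat.add_comm j, lamPair_add 2 j]
  rfl

theorem lam_one_le : lam K D 1 ≤ K - D := by
  by_cases hD : D = 0
  · exact (lam_succ_eq_zero (j := 0) hD).trans_le (Nat.zero_le _)
  · exact (lam_one hD).trans_le (Nat.mod_le _ _)

theorem sub_mem_airE_of_mem_airE_succ {i k : ℕ} (hk : k ∈ airE K D (i + 1)) :
    K - D - lam K D 1 ≤ k ∧
      k - (K - D - lam K D 1) ∈ airE (lam K D 1 + lam K D 2) (lam K D 2) i := by
  have hsum : lam K D (2 * i + 2) + lam K D (2 * i + 1 + 2) ≤ lam K D 1 :=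
    (add_le_add (lam_antitone (by omega)) (lam_antitone (by omega))).trans
      (lam_succ_add_lam_succ_succ_le 1)
  have h1 := lam_one_le (K := K) (D := D)
  simp only [airE, mem_Ico, lam_add_two, Nat.add_sub_cancel] at hk ⊢
  rw [show 2 * (i + 1) + 1 = 2 * i + 1 + 2 by ring, show 2 * (i + 1) = 2 * i + 2 by ring] at hk
  omega

end EuclideanChain

section Blocks

variable {A B m r c s b j k : ℕ}

theorem airEntry_top (hBA : B < A) (hj : j < A - A % B) :
    airEntry A B j k = decide (j % B = k % B) := by
  have hB : B ≠ 0 := by rintro rfl; simp at hj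
  rw [airEntry, dif_neg (by omega), if_pos hj]

theorem airEntry_bottomLeft (hBA : B < A) (hj : A - A % B ≤ j)
    (hk : k < B - B % (A % B)) :
    airEntry A B j k = decide (k % (A % B) = j - (A - A % B)) := by
  rw [airEntry, dif_neg (by omega), if_neg (by omega), if_pos hk]

theorem airEntry_bottomRight (hBA : B < A) (hj : A - A % B ≤ j)
    (hk : B - B % (A % B) ≤ k) (hkB : k < B) :
    airEntry A B j k =
      airEntry (A % B) (B % (A % B)) (j - (A - A % B)) (k - (B - B % (A % B))) := by
  rw [airEntry, dif_neg (by omega), if_neg (by omega), if_neg (by omega)]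

theorem airColumn_inter_Iio_self : airColumn A B k ∩ Iio A = airColumn A B k :=
  inter_eq_left.mpr fun _ hj => hj.1

theorem isGreatest_airColumn_bottomLeft (hBA : B < A) (hm : A % B = m) (hk : k < B - B % m) :
    IsGreatest (airColumn A B k) (A - m + k % m) := by
  subst hm
  have hm0 : 0 < A % B := Nat.pos_of_ne_zero fun h => by simp [h] at hk
  have hkm := Nat.mod_lt k hm0
  have hmA := Nat.mod_le A B
  refine ⟨⟨by omega, ?_⟩, fun j ⟨hjA, hj⟩ => ?_⟩
  · rw [airEntry_bottomLeft hBA (by omega) hk, decide_eq_true_eq]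
    omega
  · by_cases hjm : j < A - A % B
    · omega
    · rw [airEntry_bottomLeft hBA (by omega) hk, decide_eq_true_eq] at hj
      omega

theorem isGreatest_airColumn_inter_Iio_bottomLeft (hBA : B < A) (hm : A % B = m)
    (hk : k < B - B % m) :
    IsGreatest (airColumn A B k ∩ Iio (A - m + k % m)) (A - m - B + k) := by
  subst hm
  have hB : 0 < B := by omega
  have hkB : k < B := by omega
  have hAq := Nat.div_add_mod A B
  have hq : B ≤ B * (A / B) := Nat.le_mul_of_pos_right _ (Nat.div_pos hBA.le hB)
  have hlast : A - A % B - B = B * (A / B - 1) := by rw [Nat.mul_sub_one]; omega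
  refine ⟨⟨⟨by omega, ?_⟩, mem_Iio.mpr (by omega)⟩,
    fun j ⟨⟨hjA, hj⟩, hjb⟩ => ?_⟩
  · rw [airEntry_top hBA (by omega), hlast, Nat.mul_add_mod]
    simp
  · simp only [mem_Iio] at hjb
    by_cases hjm : j < A - A % B
    · rw [airEntry_top hBA hjm, Nat.mod_eq_of_lt hkB, decide_eq_true_eq] at hj
      have hj' := Nat.div_add_mod j B
      have hjq : j / B < A / B := (Nat.div_lt_iff_lt_mul hB).mpr (by rw [Nat.mul_comm]; omega)
      have := Nat.mul_le_mul_left B (Nat.le_sub_one_of_lt hjq)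
      omega
    · rw [airEntry_bottomLeft hBA (by omega) hk, decide_eq_true_eq] at hj
      omega

theorem isGreatest_airColumn_inter_Iio_bottomRight (hBA : B < A) (hm : A % B = m)
    (hr : B % m = r) (hk : B - r ≤ k) (hkB : k < B)
    (h : IsGreatest (airColumn m r (k - (B - r)) ∩ Iio c) s) :
    IsGreatest (airColumn A B k ∩ Iio (A - m + c)) (A - m + s) := by
  subst hm hr
  obtain ⟨⟨⟨hsm, hs⟩, hsc⟩, hmax⟩ := h
  simp only [mem_Iio] at hsc
  have hmA := Nat.mod_le A B
  refine ⟨⟨⟨by omega, ?_⟩, mem_Iio.mpr (by omega)⟩,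
    fun j ⟨⟨hjA, hj⟩, hjc⟩ => ?_⟩
  · rwa [airEntry_bottomRight hBA (by omega) hk hkB, Nat.add_sub_cancel_left]
  · simp only [mem_Iio] at hjc
    by_cases hjm : j < A - A % B
    · omega
    · rw [airEntry_bottomRight hBA (by omega) hk hkB] at hj
      have := hmax ⟨⟨by omega, hj⟩, mem_Iio.mpr (by omega)⟩
      omega

theorem ddown_eq_of_isGreatest (hkb : k ≤ b) (h : IsGreatest (airColumn A B k) b) :
    ddown A B k = b - k := by
  have hmax : ∀ t, 0 < t → k + t < A → airEntry A B (k + t) k = true → t ≤ b - k :=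
    fun t _ htA ht => by have := h.2 ⟨htA, ht⟩; omega
  unfold ddown
  rcases Nat.eq_or_lt_of_le hkb with rfl | hlt
  · have hempty : {t | 0 < t ∧ k + t < A ∧ airEntry A B (k + t) k = true} = ∅ :=
      eq_empty_of_forall_notMem fun t ⟨ht0, htA, ht⟩ => by have := hmax t ht0 htA ht; omega
    simp [hempty]
  · refine IsGreatest.csSup_eq
      ⟨⟨by omega, ?_⟩, fun t ⟨ht0, htA, ht⟩ => hmax t ht0 htA ht⟩
    rw [Nat.add_sub_cancel' hkb]
    exact ⟨h.1.1, h.1.2⟩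

theorem dup_eq_of_isGreatest (hb : b ≤ A) (h : IsGreatest (airColumn A B k ∩ Iio b) s) :
    dup A B b k = b - s := by
  have hset : {j' | j' < b ∧ airEntry A B j' k = true} = airColumn A B k ∩ Iio b := by
    ext j'
    simp only [airColumn, mem_ofPred_eq, mem_inter_iff, mem_Iio]
    constructor
    · rintro ⟨hj, he⟩
      exact ⟨⟨by omega, he⟩, hj⟩
    · rintro ⟨⟨_, he⟩, hj⟩
      exact ⟨hj, he⟩
  rw [dup, hset, h.csSup_eq]

end Blocks

theorem isGreatest_airColumn_of_mod_eq_of_mem_airE_zero {K D A k : ℕ} (hA : K - D < A)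
    (hAD : A % (K - D) = D) (hk : k ∈ airE K D 0) :
    IsGreatest (airColumn A (K - D) k) (k + (A - (K - D)) + lam K D 1) ∧
      IsGreatest (airColumn A (K - D) k ∩ Iio (k + (A - (K - D)) + lam K D 1))
        (k + (A - (K - D)) - D) := by
  change K - D - (D + lam K D 1) ≤ k ∧ k < K - D - lam K D 1 at hk
  have hD : D ≠ 0 := by
    rintro rfl
    have : lam K 0 1 = 0 := rfl
    omega
  have hr : lam K D 1 = (K - D) % D := lam_one hD
  have hDB : D < K - D := by have := Nat.mod_lt A (show 0 < K - D by omega); omega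
  have hBq := Nat.div_add_mod (K - D) D
  have hq : D ≤ D * ((K - D) / D) := Nat.le_mul_of_pos_right _ (Nat.div_pos hDB.le (by omega))
  have hAq := Nat.div_add_mod A (K - D)
  have hq' : K - D ≤ (K - D) * (A / (K - D)) :=
    Nat.le_mul_of_pos_right _ (Nat.div_pos hA.le (by omega))
  -- `E_0` is the last copy of `I_D` in the bottom-left block
  have hq1 := Nat.mul_sub_one D ((K - D) / D)
  have hkD : k % D = k - D * ((K - D) / D - 1) := by
    rw [← Nat.sub_mul_mod (show D * ((K - D) / D - 1) ≤ k by omega),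
      Nat.mod_eq_of_lt (by omega)]
  have hmid : k < K - D - (K - D) % D := by omega
  rw [show k + (A - (K - D)) + lam K D 1 = A - D + k % D by omega,
    show k + (A - (K - D)) - D = A - D - (K - D) + k by omega]
  exact ⟨isGreatest_airColumn_bottomLeft hA hAD hmid,
    isGreatest_airColumn_inter_Iio_bottomLeft hA hAD hmid⟩

theorem isGreatest_airColumn_of_mod_eq (i : ℕ) {K D A k : ℕ} (hA : K - D < A)
    (hAD : A % (K - D) = D) (hk : k ∈ airE K D i) :
    IsGreatest (airColumn A (K - D) k) (k + (A - (K - D)) + lam K D (2 * i + 1)) ∧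
      IsGreatest (airColumn A (K - D) k ∩ Iio (k + (A - (K - D)) + lam K D (2 * i + 1)))
        (k + (A - (K - D)) - lam K D (2 * i)) := by
  induction i generalizing K D A k with
  | zero => exact isGreatest_airColumn_of_mod_eq_of_mem_airE_zero hA hAD hk
  | succ i ih =>
    obtain ⟨hkr, hk'⟩ := sub_mem_airE_of_mem_airE_succ hk
    have h1 : lam K D 1 ≠ 0 := by
      intro h
      simp only [airE, mem_Ico, h] at hk'
      omega
    have h01 : lam K D 1 + lam K D 2 ≤ D := lam_succ_add_lam_succ_succ_le 0
    have hD : D ≠ 0 := by omega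
    have hr : lam K D 1 = (K - D) % D := lam_one hD
    have hrD : lam K D 1 < D := by have := Nat.mod_lt (K - D) (Nat.pos_of_ne_zero hD); omega
    have hDA : D ≤ A := by have := Nat.mod_le A (K - D); omega
    have h2 : lam K D (2 * i + 2) ≤ lam K D 2 := lam_antitone (by omega)
    have hkB : k < K - D := by simp only [airE, mem_Ico] at hk; omega
    have h1B : lam K D 1 ≤ K - D := lam_one_le
    obtain ⟨hlow, habove⟩ :=
      ih (A := D) (by omega) (by rw [Nat.add_sub_cancel, ← lam_two h1]) hk'
    simp only [Nat.add_sub_cancel, lam_add_two] at hlow habove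
    rw [← airColumn_inter_Iio_self] at hlow
    have hlift := isGreatest_airColumn_inter_Iio_bottomRight hA hAD hr.symm hkr hkB hlow
    have hlift' := isGreatest_airColumn_inter_Iio_bottomRight hA hAD hr.symm hkr hkB habove
    rw [Nat.sub_add_cancel hDA, airColumn_inter_Iio_self] at hlift
    have e1 : k + (A - (K - D)) + lam K D (2 * i + 1 + 2) =
        A - D + (k - (K - D - lam K D 1) + (D - lam K D 1) + lam K D (2 * i + 1 + 2)) := by
      omega
    have e2 : k + (A - (K - D)) - lam K D (2 * i + 2) =
        A - D + (k - (K - D - lam K D 1) + (D - lam K D 1) - lam K D (2 * i + 2)) := by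
      omega
    rw [show 2 * (i + 1) + 1 = 2 * i + 1 + 2 by ring, show 2 * (i + 1) = 2 * i + 2 by ring,
      e1, e2]
    exact ⟨hlift, hlift'⟩

theorem isGreatest_airColumn_of_mem_airE {K D i k : ℕ} (h1 : lam K D 1 ≠ 0)
    (hk : k ∈ airE K D i) :
    IsGreatest (airColumn K (K - D) k) (k + D + lam K D (2 * i + 1)) ∧
      IsGreatest (airColumn K (K - D) k ∩ Iio (k + D + lam K D (2 * i + 1)))
        (k + D - lam K D (2 * i)) := by
  have hD : D ≠ 0 := fun h => h1 (lam_succ_eq_zero h)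
  have hDK : D < K := by
    by_contra h
    rw [lam_one hD, show K - D = 0 by omega, Nat.zero_mod] at h1
    exact h1 rfl
  have hKmod : K % (K - D) = D % (K - D) := by
    rw [Nat.mod_eq_sub_mod (Nat.sub_le K D), Nat.sub_sub_self hDK.le]
  have hne : D ≠ K - D := fun h => h1 (by rw [lam_one hD, ← h, Nat.mod_self])
  rcases lt_or_gt_of_ne hne with hlt | hgt
  · have h := isGreatest_airColumn_of_mod_eq i (A := K) (by omega)
      (by rw [hKmod, Nat.mod_eq_of_lt hlt]) hk
    rwa [Nat.sub_sub_self hDK.le] at h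
  -- `λ₁ = K - D`, so the chain `K - D, K % (K - D), …` of the matrix is `λ₁, λ₂, …`
  have h1' : lam K D 1 = K - D := by rw [lam_one hD, Nat.mod_eq_of_lt hgt]
  have hn : lam K D 1 + lam K D 2 - lam K D 2 = K - D := by omega
  simp only [airE, mem_Ico] at hk
  obtain ⟨i, rfl⟩ : ∃ i', i = i' + 1 := Nat.exists_eq_succ_of_ne_zero (by
    rintro rfl
    simp only [mul_zero, zero_add] at hk
    omega)
  rw [show 2 * (i + 1) + 1 = 2 * i + 1 + 2 by ring, show 2 * (i + 1) = 2 * i + 2 by ring]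
    at hk ⊢
  have h := isGreatest_airColumn_of_mod_eq i (K := lam K D 1 + lam K D 2) (D := lam K D 2)
    (A := K) (by omega) (by rw [hn, hKmod, lam_two h1, h1'])
    (by simpa only [airE, mem_Ico, lam_add_two, hn] using hk)
  rwa [hn, lam_add_two, lam_add_two, Nat.sub_sub_self hDK.le] at h

theorem ddown_eq_and_dup_eq_of_mem_airE {K D i k : ℕ} (h1 : lam K D 1 ≠ 0)
    (hk : k ∈ airE K D i) :
    ddown K (K - D) k = D + lam K D (2 * i + 1) ∧
      dup K (K - D) (k + ddown K (K - D) k) k = lam K D (2 * i) + lam K D (2 * i + 1) := by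
  obtain ⟨hlow, habove⟩ := isGreatest_airColumn_of_mem_airE h1 hk
  have hdown : ddown K (K - D) k = D + lam K D (2 * i + 1) :=
    (ddown_eq_of_isGreatest (by omega) hlow).trans (by omega)
  have hlam : lam K D (2 * i) ≤ D := lam_antitone (Nat.zero_le _)
  rw [hdown, ← Nat.add_assoc, dup_eq_of_isGreatest hlow.1.1.le habove]
  exact ⟨rfl, by omega⟩

theorem stmt19_general (K D l i k t : ℕ)
    (hmin : ∀ j ≤ l, lam K D j ≠ 0)
    (hi : 2 * i + 1 ≤ l)
    (hk1 : K - D - lamS K D (2 * i) + (beta K D (2 * i) - 1) * lam K D (2 * i) ≤ k)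
    (hk2 : k < K - D - lam K D (2 * i + 1))
    (htK : k + ddown K (K - D) k + t < K) :
    (K - lam K D (2 * i) ≤ k + t + ddown K (K - D) (k + t) ∧
      k + t + ddown K (K - D) (k + t) < K) ∧
    (K - D - lamS K D (2 * i) ≤ k + t ∧
      k + t < K - D - lamS K D (2 * i) + beta K D (2 * i) * lam K D (2 * i)) ∧
    ddown K (K - D) (k + t) = ddown K (K - D) k ∧
    ddown K (K - D) k = D + lam K D (2 * i + 1) ∧
    dup K (K - D) (k + t + ddown K (K - D) (k + t)) (k + t) =
      lam K D (2 * i) + lam K D (2 * i + 1) := by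
  have h1 : lam K D 1 ≠ 0 := hmin 1 (by omega)
  have hS := lamS_eq_beta_mul_add (hmin (2 * i) (by omega))
  have hβ := Nat.sub_one_mul (beta K D (2 * i)) (lam K D (2 * i))
  have hk : k ∈ airE K D i := ⟨by omega, hk2⟩
  obtain ⟨hdk, -⟩ := ddown_eq_and_dup_eq_of_mem_airE h1 hk
  have hkt : k + t ∈ airE K D i := ⟨by simp only [airE, mem_Ico] at hk; omega, by omega⟩
  obtain ⟨hdkt, hupkt⟩ := ddown_eq_and_dup_eq_of_mem_airE h1 hkt
  refine ⟨⟨by omega, by omega⟩, ⟨by omega, by omega⟩, hdkt.trans hdk.symm, hdk, hupkt⟩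

/-- For k ∈ E_i and each r-th down-distance t of L(k+d_down(k), k+μ_k): the bottom one of
column k+t lies in the even submatrix I_{λ_{2i}×β_{2i}λ_{2i}}, d_down(k+t) = d_down(k)
= D + λ_{2i+1}, and d_up(k+t+d_down(k+t), k+t) = λ_{2i} + λ_{2i+1}. -/
theorem stmt19 (K D l i k c d t : ℕ) (hD : 0 < D) (hDK : D < K)
    (hl : lam K D (l + 1) = 0) (hmin : ∀ j ≤ l, lam K D j ≠ 0)
    (hi : 2 * i + 1 ≤ l)
    (hk1 : K - D - lamS K D (2 * i) + (beta K D (2 * i) - 1) * lam K D (2 * i) ≤ k)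
    (hk2 : k < K - D - lam K D (2 * i + 1))
    (hkR : k % (K - D - lamS K D (2 * i)) =
      (beta K D (2 * i) - 1) * lam K D (2 * i) + c * lam K D (2 * i + 1) + d)
    (hd : d < lam K D (2 * i + 1))
    (ht0 : 0 < t) (htK : k + ddown K (K - D) k + t < K)
    (hte : airEntry K (K - D) (k + ddown K (K - D) k + t)
      (k + (lam K D (2 * i) - c * lam K D (2 * i + 1))) = true) :
    (K - lam K D (2 * i) ≤ k + t + ddown K (K - D) (k + t) ∧
      k + t + ddown K (K - D) (k + t) < K) ∧
    (K - D - lamS K D (2 * i) ≤ k + t ∧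
      k + t < K - D - lamS K D (2 * i) + beta K D (2 * i) * lam K D (2 * i)) ∧
    ddown K (K - D) (k + t) = ddown K (K - D) k ∧
    ddown K (K - D) k = D + lam K D (2 * i + 1) ∧
    dup K (K - D) (k + t + ddown K (K - D) (k + t)) (k + t) =
      lam K D (2 * i) + lam K D (2 * i + 1) :=
  stmt19_general K D l i k t hmin hi hk1 hk2 htK
end
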